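/- Let H be a complex Hilbert space, C a conjugation on H, and η = [[γ, α],[α*, 1 − γ̄]] a bounded self-adjoint operator on H ⊕ H with 0 ≤ η ≤ 1, where γ̄ := CγC and γ = γ*. Then α α* ≤ γ (1 − γ). -/

import Mathlib

open ContinuousLinearMap

variable {H : Type*} [NormedAddCommGroup H] [InnerProductSpace ℂ H] [CompleteSpace H]

/-- Key abstract lemma: if `0 ≤ η ≤ 1` then `⟪ηv, ηv⟫ ≤ re ⟪v, ηv⟫` for all `v`. -/
lemma key_eta_sq_le {E : Type*} [NormedAddCommGroup E] [InnerProductSpace ℂ E] [CompleteSpace E]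
    (η : E →L[ℂ] E) (hpos : η.IsPositive)
    (hle : (ContinuousLinearMap.id ℂ E - η).IsPositive) (v : E) :
    RCLike.re (inner ℂ (η v) (η v) : ℂ) ≤ RCLike.re (inner ℂ (η v) v : ℂ) := by
  have hsa : IsSelfAdjoint η := hpos.isSelfAdjoint
  have hηadj : ContinuousLinearMap.adjoint η = η := hsa
  have hsa' : ∀ u w : E, (inner ℂ (η u) w : ℂ) = inner ℂ u (η w) := fun u w => by
    conv_lhs => rw [← hηadj]
    exact ContinuousLinearMap.adjoint_inner_left η w u
  set a : ℝ := RCLike.re (inner ℂ (η v) v : ℂ) with ha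
  set b : ℝ := RCLike.re (inner ℂ (η v) (η v) : ℂ) with hb
  have hb0 : 0 ≤ b := by
    rw [hb]; exact inner_self_nonneg
  have ha0 : 0 ≤ a := hpos.2 v
  -- c := re ⟪η (η v), η v⟫ ≤ b  from 1 - η ≥ 0 applied at η v
  have hc : RCLike.re (inner ℂ (η (η v)) (η v) : ℂ) ≤ b := by
    have := hle.2 (η v)
    rw [ContinuousLinearMap.reApplyInnerSelf] at this
    simp only [ContinuousLinearMap.sub_apply, ContinuousLinearMap.id_apply,
      inner_sub_left, map_sub] at this
    linarith
  have hc0 : 0 ≤ RCLike.re (inner ℂ (η (η v)) (η v) : ℂ) := hpos.2 (η v)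
  -- quadratic in t : for all real t, 0 ≤ a t² + 2 b t + b
  have hquad : ∀ t : ℝ, 0 ≤ a * t ^ 2 + 2 * b * t + b := by
    intro t
    have h1 : 0 ≤ RCLike.re (inner ℂ (η ((t : ℂ) • v + η v)) ((t : ℂ) • v + η v) : ℂ) :=
      hpos.2 _
    have hexp : (inner ℂ (η ((t : ℂ) • v + η v)) ((t : ℂ) • v + η v) : ℂ)
        = (t : ℂ) * (t : ℂ) * inner ℂ (η v) v + (t : ℂ) * inner ℂ (η v) (η v)
          + (t : ℂ) * inner ℂ (η (η v)) v + inner ℂ (η (η v)) (η v) := by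
      simp only [map_add, map_smul, inner_add_left, inner_add_right, inner_smul_left,
        inner_smul_right, Complex.conj_ofReal]
      ring
    have hswap : (inner ℂ (η (η v)) v : ℂ) = inner ℂ (η v) (η v) := by
      rw [hsa' (η v) v]
    rw [hexp, hswap] at h1
    have h2 : RCLike.re ((t : ℂ) * (t : ℂ) * (inner ℂ (η v) v : ℂ)
        + (t : ℂ) * (inner ℂ (η v) (η v) : ℂ)
        + (t : ℂ) * (inner ℂ (η v) (η v) : ℂ) + (inner ℂ (η (η v)) (η v) : ℂ))
        = t * t * a + t * b + t * b + RCLike.re (inner ℂ (η (η v)) (η v) : ℂ) := by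
      simp only [map_add]
      rw [show ((t : ℂ) * (t : ℂ) * (inner ℂ (η v) v : ℂ)) = (((t*t : ℝ)) : ℂ) * inner ℂ (η v) v by
        push_cast; ring]
      simp only [RCLike.re_ofReal_mul, RCLike.re_to_complex]
      rw [ha, hb]
      simp only [RCLike.re_to_complex, Complex.mul_re, Complex.ofReal_re, Complex.ofReal_im]
      ring
    rw [h2] at h1
    nlinarith [hc]
  -- discriminant argument
  have hd : discrim a (2 * b) b ≤ 0 := by
    apply discrim_le_zero
    intro t
    have := hquad t
    nlinarith [this]
  rw [discrim] at hd
  nlinarith [hb0, ha0, hd]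

/-- Let `η = [[γ, α],[α*, 1 − γ̄]]` be a bounded self-adjoint operator on `H ⊕ H` with
`0 ≤ η ≤ 1`, where `γ̄ = CγC` for a conjugation `C` and `γ = γ*`.
Then `α α* ≤ γ (1 − γ)`. -/
theorem alpha_alphaStar_le_gamma_one_sub_gamma
    (C : H → H)
    (hC_add : ∀ x y, C (x + y) = C x + C y)
    (hC_smul : ∀ (c : ℂ) (x), C (c • x) = (starRingEnd ℂ) c • C x)
    (hC_invol : ∀ x, C (C x) = x)
    (hC_inner : ∀ x y, (inner ℂ (C x) (C y) : ℂ) = inner ℂ y x)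
    (γ α : H →L[ℂ] H) (hγ_sa : IsSelfAdjoint γ)
    (γbar : H →L[ℂ] H) (hγbar : ∀ x, γbar x = C (γ (C x)))
    (η : WithLp 2 (H × H) →L[ℂ] WithLp 2 (H × H))
    (hη_block : ∀ x y : H,
      η ((WithLp.equiv 2 (H × H)).symm (x, y)) =
        (WithLp.equiv 2 (H × H)).symm (γ x + α y, adjoint α x + (y - γbar y)))
    (hη_sa : IsSelfAdjoint η)
    (hη_pos : η.IsPositive)
    (hη_le_one : (ContinuousLinearMap.id ℂ (WithLp 2 (H × H)) - η).IsPositive) :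
    (γ.comp (ContinuousLinearMap.id ℂ H - γ) - α.comp (adjoint α)).IsPositive := by
  have hγadj : ContinuousLinearMap.adjoint γ = γ := hγ_sa
  constructor
  · -- self-adjointness
    rw [← ContinuousLinearMap.isSelfAdjoint_iff_isSymmetric]
    rw [ContinuousLinearMap.isSelfAdjoint_iff'] at *
    simp only [map_sub, ContinuousLinearMap.adjoint_comp, ContinuousLinearMap.adjoint_adjoint,
      ContinuousLinearMap.adjoint_id, hγadj]
    ext x
    simp [ContinuousLinearMap.comp_apply, map_sub]
  · intro x
    set v : WithLp 2 (H × H) := (WithLp.equiv 2 (H × H)).symm (x, 0) with hv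
    have hηv : η v = (WithLp.equiv 2 (H × H)).symm (γ x, adjoint α x) := by
      rw [hv, hη_block x 0]
      simp
    have hkey := key_eta_sq_le η hη_pos hη_le_one v
    rw [hηv] at hkey
    have hinner1 : RCLike.re (inner ℂ ((WithLp.equiv 2 (H × H)).symm (γ x, adjoint α x))
        ((WithLp.equiv 2 (H × H)).symm (γ x, adjoint α x)) : ℂ)
        = RCLike.re (inner ℂ (γ x) (γ x) : ℂ) + RCLike.re (inner ℂ ((adjoint α) x) ((adjoint α) x) : ℂ) := by
      rw [WithLp.prod_inner_apply]
      simp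
    have hinner2 : RCLike.re (inner ℂ ((WithLp.equiv 2 (H × H)).symm (γ x, adjoint α x)) v : ℂ)
        = RCLike.re (inner ℂ (γ x) x : ℂ) := by
      rw [hv, WithLp.prod_inner_apply]
      simp
    rw [hinner1, hinner2] at hkey
    -- now express the goal
    rw [ContinuousLinearMap.reApplyInnerSelf]
    simp only [ContinuousLinearMap.sub_apply, ContinuousLinearMap.comp_apply,
      ContinuousLinearMap.id_apply, map_sub, inner_sub_left]
    have e1 : (inner ℂ (γ (γ x)) x : ℂ) = inner ℂ (γ x) (γ x) := by
      rw [← ContinuousLinearMap.adjoint_inner_right γ (γ x) x, hγadj]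
    have e2 : (inner ℂ (α ((adjoint α) x)) x : ℂ) = inner ℂ ((adjoint α) x) ((adjoint α) x) := by
      rw [← ContinuousLinearMap.adjoint_inner_right α ((adjoint α) x) x]
    rw [e1, e2]
    linarith
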